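/- arXiv:2307.16491 — 2 statements merged into one kernel-verified Lean document; each statement's English description precedes it below -/
import Mathlib

section
/- Let p > 1, γ ≥ 0, 0 < a < b, c > 0 and M ≥ 0. Suppose V : (a,b] → [0,∞) is a measurable function such that V(t) < ∞ and V(t) ≥ M + c ∫_a^t s^{−γ} V(s)^p ds for almost every t ∈ (a,b]. Then M^{p−1} · (p−1) · c · ∫_a^b s^{−γ} ds ≤ 1, i.e. M ≤ ((p−1) c ∫_a^b s^{−γ} ds)^{−1/(p−1)}. -/
open MeasureTheory Real Set
open scoped ENNReal

noncomputable def odeF (γ a t : ℝ) : ℝ := ∫ s in a..t, s ^ (-γ)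

lemma odeF_intable (γ : ℝ) {x y : ℝ} (hx : 0 < x) (hy : 0 < y) :
    IntervalIntegrable (fun s : ℝ => s ^ (-γ)) volume x y := by
  apply ContinuousOn.intervalIntegrable
  intro s hs
  have hs0 : 0 < s := lt_of_lt_of_le (lt_min hx hy) hs.1
  exact (Real.continuousAt_rpow_const s (-γ) (Or.inl hs0.ne')).continuousWithinAt

lemma odeF_hasDerivAt (γ : ℝ) {a : ℝ} (ha : 0 < a) {t : ℝ} (ht : 0 < t) :
    HasDerivAt (odeF γ a) (t ^ (-γ)) t := by
  apply intervalIntegral.integral_hasDerivAt_right (odeF_intable γ ha ht)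
  · exact ContinuousAt.stronglyMeasurableAtFilter isOpen_Ioi
      (fun x hx => Real.continuousAt_rpow_const x (-γ) (Or.inl (ne_of_gt hx))) t ht
  · exact Real.continuousAt_rpow_const t (-γ) (Or.inl ht.ne')

lemma odeF_lt {γ a : ℝ} (ha : 0 < a) {s t : ℝ} (has : a ≤ s) (hst : s < t) :
    odeF γ a s < odeF γ a t := by
  have hs0 : 0 < s := lt_of_lt_of_le ha has
  have ht0 : 0 < t := hs0.trans hst
  have hadd := intervalIntegral.integral_add_adjacent_intervals
    (odeF_intable γ ha hs0) (odeF_intable γ hs0 ht0)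
  have hpos : 0 < ∫ u in s..t, u ^ (-γ) := by
    apply intervalIntegral.intervalIntegral_pos_of_pos_on (odeF_intable γ hs0 ht0) _ hst
    intro x hx
    exact Real.rpow_pos_of_pos (hs0.trans hx.1) _
  unfold odeF
  linarith [hadd]

lemma odeF_self (γ a : ℝ) : odeF γ a a = 0 := intervalIntegral.integral_same

noncomputable def odeZ (γ p c a M' t : ℝ) : ℝ :=
  (M' ^ (1 - p) - (p - 1) * c * odeF γ a t) ^ (-(1 / (p - 1)))

lemma odeZ_left {γ p c a M' : ℝ} (hp : 1 < p) (hM' : 0 < M') :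
    odeZ γ p c a M' a = M' := by
  unfold odeZ
  rw [odeF_self, mul_zero, sub_zero, ← Real.rpow_mul hM'.le]
  have hne : p - 1 ≠ 0 := by linarith
  have : (1 - p) * -(1 / (p - 1)) = 1 := by
    field_simp
    ring
  rw [this, Real.rpow_one]

lemma odeZ_hasDerivAt {γ p c a M' t : ℝ} (hp : 1 < p) (ha : 0 < a) (ht : 0 < t)
    (hgt : 0 < M' ^ (1 - p) - (p - 1) * c * odeF γ a t) :
    HasDerivAt (odeZ γ p c a M' ) (c * t ^ (-γ) * odeZ γ p c a M' t ^ p) t := by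
  have hp1 : (0:ℝ) < p - 1 := by linarith
  have hg : HasDerivAt (fun u => M' ^ (1 - p) - (p - 1) * c * odeF γ a u)
      (-((p - 1) * c * t ^ (-γ))) t := by
    exact ((odeF_hasDerivAt γ ha ht).const_mul ((p - 1) * c)).const_sub (M' ^ (1 - p))
  have h2 := hg.rpow_const (p := -(1 / (p - 1))) (Or.inl hgt.ne')
  convert h2 using 1
  · funext y; rfl
  have he : (M' ^ (1 - p) - (p - 1) * c * odeF γ a t) ^ (-(1 / (p - 1)) - 1)
      = odeZ γ p c a M' t ^ p := by
    unfold odeZ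
    rw [← Real.rpow_mul hgt.le]
    congr 1
    field_simp
    ring
  rw [he]
  have hne : p - 1 ≠ 0 := by linarith
  field_simp

lemma odeZ_pos {γ p c a M' t : ℝ}
    (hgt : 0 < M' ^ (1 - p) - (p - 1) * c * odeF γ a t) :
    0 < odeZ γ p c a M' t := Real.rpow_pos_of_pos hgt _

lemma odeZ_ftc {γ p c a M' : ℝ} (hp : 1 < p) (ha : 0 < a) (hM' : 0 < M') {t : ℝ}
    (hat : a ≤ t)
    (hg : ∀ s ∈ Icc a t, 0 < M' ^ (1 - p) - (p - 1) * c * odeF γ a s) :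
    ∫ s in a..t, c * s ^ (-γ) * odeZ γ p c a M' s ^ p = odeZ γ p c a M' t - M' := by
  have huIcc : uIcc a t = Icc a t := uIcc_of_le hat
  have hderiv : ∀ x ∈ uIcc a t,
      HasDerivAt (odeZ γ p c a M') (c * x ^ (-γ) * odeZ γ p c a M' x ^ p) x := by
    intro x hx
    rw [huIcc] at hx
    exact odeZ_hasDerivAt hp ha (lt_of_lt_of_le ha hx.1) (hg x hx)
  have hcont : ContinuousOn (fun s => c * s ^ (-γ) * odeZ γ p c a M' s ^ p) (uIcc a t) := by
    intro x hx
    rw [huIcc] at hx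
    apply ContinuousAt.continuousWithinAt
    have hx0 : 0 < x := lt_of_lt_of_le ha hx.1
    have hζ : ContinuousAt (odeZ γ p c a M') x :=
      (odeZ_hasDerivAt hp ha hx0 (hg x hx)).continuousAt
    have h1 : ContinuousAt (fun s : ℝ => c * s ^ (-γ)) x :=
      continuousAt_const.mul (Real.continuousAt_rpow_const x (-γ) (Or.inl hx0.ne'))
    exact h1.mul (hζ.rpow_const (Or.inl (odeZ_pos (hg x hx)).ne'))
  rw [intervalIntegral.integral_eq_sub_of_hasDerivAt hderiv hcont.intervalIntegrable,
    odeZ_left hp hM']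

lemma odeZ_contAt {γ p c a M' t : ℝ} (hp : 1 < p) (ha : 0 < a) (ht : 0 < t)
    (hgt : 0 < M' ^ (1 - p) - (p - 1) * c * odeF γ a t) :
    ContinuousAt (odeZ γ p c a M') t :=
  (odeZ_hasDerivAt hp ha ht hgt).continuousAt

/-- the ordinary-differential-inequality comparison step. If a finite
measurable `V : (a,b] → [0,∞)` satisfies `V(t) ≥ M + c ∫_a^t s^{-γ} V(s)^p ds` a.e.,
then `M^{p-1} (p-1) c ∫_a^b s^{-γ} ds ≤ 1`, i.e.
`M ≤ ((p-1) c ∫_a^b s^{-γ} ds)^{-1/(p-1)}`. -/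
theorem ode_comparison
    (p γ a b c M : ℝ) (hp : 1 < p) (hγ : 0 ≤ γ) (ha : 0 < a) (hab : a < b)
    (hc : 0 < c) (hM : 0 ≤ M) (V : ℝ → ℝ≥0∞) (hV : Measurable V)
    (hineq : ∀ᵐ t ∂(volume.restrict (Ioc a b)),
      V t < ∞ ∧
      ENNReal.ofReal M + ENNReal.ofReal c *
        ∫⁻ s in Ioc a t, ENNReal.ofReal (s ^ (-γ)) * V s ^ p ≤ V t) :
    M ^ (p - 1) * ((p - 1) * c * ∫ s in Ioc a b, s ^ (-γ)) ≤ 1 ∧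
    M ≤ ((p - 1) * c * ∫ s in Ioc a b, s ^ (-γ)) ^ (-(1 : ℝ) / (p - 1)) := by
  have hp1 : (0:ℝ) < p - 1 := by linarith
  have hp0 : (0:ℝ) < p := by linarith
  set I : ℝ := ∫ s in Ioc a b, s ^ (-γ) with hIdef
  have hIeq : I = odeF γ a b := by
    rw [hIdef]; unfold odeF; rw [intervalIntegral.integral_of_le hab.le]
  have hIpos : 0 < I := by
    rw [hIeq]
    have := odeF_lt (γ := γ) ha (le_refl a) hab
    rwa [odeF_self] at this
  have main : M ^ (p - 1) * ((p - 1) * c * I) ≤ 1 := by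
    by_contra hcon
    push_neg at hcon
    have hM0 : 0 < M := by
      rcases eq_or_lt_of_le hM with h | h
      · rw [← h, Real.zero_rpow hp1.ne', zero_mul] at hcon; linarith
      · exact h
    have hA : 0 < M ^ (p - 1) := Real.rpow_pos_of_pos hM0 _
    have hKF : M ^ (1 - p) < (p - 1) * c * odeF γ a b := by
      have h2 := mul_lt_mul_of_pos_left hcon (inv_pos.mpr hA)
      rw [mul_one, ← mul_assoc, inv_mul_cancel₀ hA.ne', one_mul] at h2
      rw [show (1:ℝ) - p = -(p-1) by ring, Real.rpow_neg hM, ← hIeq]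
      exact h2
    have hcontM : ContinuousAt (fun x : ℝ => x ^ (1 - p)) M :=
      Real.continuousAt_rpow_const M _ (Or.inl hM0.ne')
    obtain ⟨δ₀, hδ₀0, hδ₀⟩ := Metric.continuousAt_iff.mp hcontM
      ((p - 1) * c * odeF γ a b - M ^ (1 - p)) (by linarith)
    set ε := min (M / 2) (δ₀ / 2) with hεdef
    have hε0 : 0 < ε := lt_min (by linarith) (by linarith)
    have hεM : ε < M := lt_of_le_of_lt (min_le_left _ _) (by linarith)
    set M' := M - ε with hM'def
    have hM'0 : 0 < M' := by rw [hM'def]; linarith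
    have hεlt : M' ^ (1 - p) < (p - 1) * c * odeF γ a b := by
      have hd : dist M' M < δ₀ := by
        rw [Real.dist_eq, hM'def, abs_of_nonpos (by linarith)]
        have : ε ≤ δ₀ / 2 := min_le_right _ _
        linarith
      have h3 := hδ₀ hd
      rw [Real.dist_eq] at h3
      have h4 := (abs_lt.mp h3).2
      linarith
    -- IVT for g t = M'^(1-p) - (p-1)*c*F t
    have hgconta : ∀ x : ℝ, 0 < x →
        ContinuousAt (fun t : ℝ => M' ^ (1 - p) - (p - 1) * c * odeF γ a t) x := by
      intro x hx
      exact continuousAt_const.sub ((odeF_hasDerivAt γ ha hx).continuousAt.const_mul _)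
    obtain ⟨t₀, ht₀, hgt₀0⟩ : ∃ t₀ ∈ Ioo a b,
        (fun t : ℝ => M' ^ (1 - p) - (p - 1) * c * odeF γ a t) t₀ = 0 := by
      apply intermediate_value_Ioo' hab.le
        (fun x hx => (hgconta x (lt_of_lt_of_le ha hx.1)).continuousWithinAt)
      constructor
      · show M' ^ (1 - p) - (p - 1) * c * odeF γ a b < 0
        linarith
      · simp only [odeF_self, mul_zero, sub_zero]
        positivity
    have hgt₀ : M' ^ (1 - p) - (p - 1) * c * odeF γ a t₀ = 0 := hgt₀0
    have hgpos : ∀ s ∈ Ico a t₀, 0 < M' ^ (1 - p) - (p - 1) * c * odeF γ a s := by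
      intro s hs
      have h1 : odeF γ a s < odeF γ a t₀ := odeF_lt ha hs.1 hs.2
      have h2 : (0:ℝ) < (p - 1) * c := by positivity
      nlinarith
    set ζ := odeZ γ p c a M' with hζdef
    set W : ℝ → ℝ≥0∞ := fun t => ENNReal.ofReal M + ENNReal.ofReal c *
      ∫⁻ s in Ioc a t, ENNReal.ofReal (s ^ (-γ)) * V s ^ p with hWdef
    have hineq' : ∀ᵐ t ∂(volume.restrict (Ioc a b)), V t < ∞ ∧ W t ≤ V t := by
      filter_upwards [hineq] with t ht
      exact ⟨ht.1, by rw [hWdef]; exact ht.2⟩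
    -- key step
    have key : ∀ u, u ∈ Ico a t₀ → (∀ s ∈ Ioo a u, ENNReal.ofReal (ζ s) ≤ W s) →
        ∀ t, u ≤ t → t ≤ b → ENNReal.ofReal (ζ u + ε) ≤ W t := by
      intro u hu hbel t hut htb
      have hau : a ≤ u := hu.1
      have hub : u ≤ b := le_trans hut htb
      have hgIcc : ∀ s ∈ Icc a u, 0 < M' ^ (1 - p) - (p - 1) * c * odeF γ a s :=
        fun s hs => hgpos s ⟨hs.1, lt_of_le_of_lt hs.2 hu.2⟩
      have hftc : ∫ s in a..u, c * s ^ (-γ) * ζ s ^ p = ζ u - M' :=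
        odeZ_ftc hp ha hM'0 hau hgIcc
      have hζpos : ∀ s ∈ Icc a u, 0 < ζ s := fun s hs => odeZ_pos (hgIcc s hs)
      have hζu : M' ≤ ζ u := by
        have hnn : 0 ≤ ∫ s in a..u, c * s ^ (-γ) * ζ s ^ p := by
          apply intervalIntegral.integral_nonneg hau
          intro x hx
          have hx0 : 0 < x := lt_of_lt_of_le ha hx.1
          exact mul_nonneg (mul_nonneg hc.le (Real.rpow_nonneg hx0.le _))
            (Real.rpow_nonneg (hζpos x hx).le _)
        linarith [hftc]
      have hcontI : ContinuousOn (fun s : ℝ => s ^ (-γ) * ζ s ^ p) (Icc a u) := by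
        intro x hx
        apply ContinuousAt.continuousWithinAt
        have hx0 : 0 < x := lt_of_lt_of_le ha hx.1
        exact (Real.continuousAt_rpow_const x (-γ) (Or.inl hx0.ne')).mul
          ((odeZ_contAt hp ha hx0 (hgIcc x hx)).rpow_const (Or.inl (hζpos x hx).ne'))
      have hint : IntegrableOn (fun s : ℝ => s ^ (-γ) * ζ s ^ p) (Ioc a u) volume :=
        hcontI.integrableOn_Icc.mono_set Ioc_subset_Icc_self
      have hcalc : ENNReal.ofReal c *
          ∫⁻ s in Ioc a u, ENNReal.ofReal (s ^ (-γ)) * (ENNReal.ofReal (ζ s)) ^ p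
          = ENNReal.ofReal (ζ u - M') := by
        have heq : ∀ s ∈ Ioc a u, ENNReal.ofReal (s ^ (-γ)) * (ENNReal.ofReal (ζ s)) ^ p
            = ENNReal.ofReal (s ^ (-γ) * ζ s ^ p) := by
          intro s hs
          have hs0 : 0 < s := lt_of_lt_of_le ha hs.1.le
          rw [ENNReal.ofReal_rpow_of_nonneg (hζpos s ⟨hs.1.le, hs.2⟩).le hp0.le,
            ← ENNReal.ofReal_mul (Real.rpow_nonneg hs0.le _)]
        rw [setLIntegral_congr_fun measurableSet_Ioc heq,
          ← ofReal_integral_eq_lintegral_ofReal hint ?nn, ← ENNReal.ofReal_mul hc.le]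
        case nn =>
          filter_upwards [ae_restrict_mem measurableSet_Ioc] with s hs
          have hs0 : 0 < s := lt_of_lt_of_le ha hs.1.le
          exact mul_nonneg (Real.rpow_nonneg hs0.le _)
            (Real.rpow_nonneg (hζpos s ⟨hs.1.le, hs.2⟩).le _)
        congr 1
        rw [show (∫ s in Ioc a u, s ^ (-γ) * ζ s ^ p)
            = ∫ s in a..u, s ^ (-γ) * ζ s ^ p from
            (intervalIntegral.integral_of_le hau).symm, ← hftc,
          ← intervalIntegral.integral_const_mul]
        congr 1
        ext s
        ring
      have hu_ae : ∀ᵐ s ∂(volume.restrict (Ioc a u)), s ≠ u := by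
        rw [ae_iff]
        have h0 : {s : ℝ | ¬s ≠ u} = {u} := by ext x; simp
        rw [h0]
        exact le_antisymm ((Measure.restrict_apply_le _ _).trans (by simp)) zero_le
      have hmono : ENNReal.ofReal (ζ u - M') ≤ ENNReal.ofReal c *
          ∫⁻ s in Ioc a u, ENNReal.ofReal (s ^ (-γ)) * V s ^ p := by
        rw [← hcalc]
        apply mul_le_mul_right
        apply lintegral_mono_ae
        have h1 := ae_restrict_of_ae_restrict_of_subset (Ioc_subset_Ioc_right hub) hineq'
        filter_upwards [h1, ae_restrict_mem measurableSet_Ioc, hu_ae] with s hsV hsm hsu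
        have hso : s ∈ Ioo a u := ⟨hsm.1, lt_of_le_of_ne hsm.2 hsu⟩
        have h2 : ENNReal.ofReal (ζ s) ≤ V s := le_trans (hbel s hso) hsV.2
        exact mul_le_mul_right (ENNReal.rpow_le_rpow h2 hp0.le) _
      calc ENNReal.ofReal (ζ u + ε)
          = ENNReal.ofReal M + ENNReal.ofReal (ζ u - M') := by
            rw [← ENNReal.ofReal_add hM (by linarith)]
            congr 1
            rw [hM'def]
            ring
        _ ≤ ENNReal.ofReal M + ENNReal.ofReal c *
              ∫⁻ s in Ioc a u, ENNReal.ofReal (s ^ (-γ)) * V s ^ p :=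
            add_le_add_right hmono _
        _ ≤ W t := by
            rw [hWdef]
            exact add_le_add_right (mul_le_mul_right
              (lintegral_mono_set (Ioc_subset_Ioc_right hut)) _) _
    -- comparison: ζ ≤ W below t₀
    have hcompW : ∀ t', t' ∈ Ioo a t₀ → ∀ t ∈ Ioc a t', ENNReal.ofReal (ζ t) ≤ W t := by
      intro t' ht'
      by_contra hS
      push_neg at hS
      obtain ⟨t1, ht1m, ht1lt⟩ := hS
      set S := {t : ℝ | t ∈ Ioc a t' ∧ W t < ENNReal.ofReal (ζ t)} with hSdef
      have hSne : S.Nonempty := ⟨t1, ht1m, ht1lt⟩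
      have hSbd : BddBelow S := ⟨a, fun x hx => hx.1.1.le⟩
      have hτa : a ≤ sInf S := le_csInf hSne (fun x hx => hx.1.1.le)
      have hτt' : sInf S ≤ t' := le_trans (csInf_le hSbd ⟨ht1m, ht1lt⟩) ht1m.2
      have hτt₀ : sInf S < t₀ := lt_of_le_of_lt hτt' ht'.2
      have hbel : ∀ s ∈ Ioo a (sInf S), ENNReal.ofReal (ζ s) ≤ W s := by
        intro s hs
        by_contra h
        have hsS : s ∈ S := ⟨⟨hs.1, le_trans hs.2.le hτt'⟩, lt_of_not_ge h⟩
        exact absurd (csInf_le hSbd hsS) (not_le.mpr hs.2)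
      have hkey := key (sInf S) ⟨hτa, hτt₀⟩ hbel
      have hζτcont : ContinuousAt ζ (sInf S) :=
        odeZ_contAt hp ha (lt_of_lt_of_le ha hτa) (hgpos _ ⟨hτa, hτt₀⟩)
      obtain ⟨δ, hδ0, hδ⟩ := Metric.continuousAt_iff.mp hζτcont ε hε0
      obtain ⟨t2, ht2S, ht2lt⟩ := exists_lt_of_csInf_lt hSne
        (show sInf S < sInf S + δ by linarith)
      have hτt2 : sInf S ≤ t2 := csInf_le hSbd ht2S
      have ht2b : t2 ≤ b := le_trans ht2S.1.2 (le_trans ht'.2.le ht₀.2.le)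
      have h1 : ENNReal.ofReal (ζ (sInf S) + ε) ≤ W t2 := hkey t2 hτt2 ht2b
      have h2 : W t2 < ENNReal.ofReal (ζ t2) := ht2S.2
      have hζt2pos : 0 < ζ t2 :=
        odeZ_pos (hgpos t2 ⟨le_trans hτa hτt2, lt_of_le_of_lt ht2S.1.2 ht'.2⟩)
      have h3 : ζ (sInf S) + ε < ζ t2 :=
        (ENNReal.ofReal_lt_ofReal_iff hζt2pos).mp (lt_of_le_of_lt h1 h2)
      have h4 : dist t2 (sInf S) < δ := by
        rw [Real.dist_eq, abs_of_nonneg (by linarith)]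
        linarith
      have h5 := hδ h4
      rw [Real.dist_eq] at h5
      have h6 := abs_lt.mp h5
      linarith [h6.1, h6.2]
    -- blow-up of ζ near t₀
    have hblow : ∀ R : ℝ, ∃ u ∈ Ioo a t₀, R ≤ ζ u := by
      intro R
      have ht₀0 : 0 < t₀ := lt_trans ha ht₀.1
      have hR1 : (0:ℝ) < max R 1 := lt_of_lt_of_le one_pos (le_max_right _ _)
      have hη0 : 0 < (max R 1) ^ (-(p - 1)) := Real.rpow_pos_of_pos hR1 _
      have hgc : ContinuousAt (fun t : ℝ => M' ^ (1 - p) - (p - 1) * c * odeF γ a t) t₀ :=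
        hgconta t₀ ht₀0
      obtain ⟨δ, hδ0, hδ⟩ := Metric.continuousAt_iff.mp hgc _ hη0
      set u := max ((a + t₀) / 2) (t₀ - δ / 2) with hu
      have hau : a < u := lt_of_lt_of_le (by linarith [ht₀.1] : a < (a + t₀) / 2)
        (le_max_left _ _)
      have hut₀ : u < t₀ := max_lt (by linarith [ht₀.1]) (by linarith)
      have hdist : dist u t₀ < δ := by
        rw [Real.dist_eq, abs_of_neg (by linarith : u - t₀ < 0)]
        have h7 : t₀ - δ / 2 ≤ u := le_max_right _ _
        linarith
      have hgu := hδ hdist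
      rw [Real.dist_eq] at hgu
      simp only [hgt₀0, sub_zero] at hgu
      have hgu2 : M' ^ (1 - p) - (p - 1) * c * odeF γ a u < (max R 1) ^ (-(p - 1)) :=
        lt_of_le_of_lt (le_abs_self _) hgu
      have hgupos : 0 < M' ^ (1 - p) - (p - 1) * c * odeF γ a u :=
        hgpos u ⟨hau.le, hut₀⟩
      refine ⟨u, ⟨hau, hut₀⟩, ?_⟩
      have h3 : ((max R 1) ^ (-(p - 1))) ^ (-(1 / (p - 1))) ≤ ζ u := by
        rw [hζdef]
        unfold odeZ
        exact Real.rpow_le_rpow_of_nonpos hgupos hgu2.le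
          (neg_nonpos.mpr (by positivity))
      have h4 : ((max R 1) ^ (-(p - 1))) ^ (-(1 / (p - 1))) = max R 1 := by
        rw [← Real.rpow_mul hR1.le]
        have he : -(p - 1) * -(1 / (p - 1)) = 1 := by
          field_simp
        rw [he, Real.rpow_one]
      calc R ≤ max R 1 := le_max_left _ _
        _ = _ := h4.symm
        _ ≤ ζ u := h3
    -- W is infinite past t₀
    have hWtop : ∀ t, t₀ ≤ t → t ≤ b → W t = ⊤ := by
      intro t ht₀t htb
      by_contra hne
      obtain ⟨u, hu, hRu⟩ := hblow ((W t).toReal + 1)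
      have hbel : ∀ s ∈ Ioo a u, ENNReal.ofReal (ζ s) ≤ W s :=
        fun s hs => hcompW u hu s ⟨hs.1, hs.2.le⟩
      have h1 : ENNReal.ofReal (ζ u + ε) ≤ W t :=
        key u ⟨hu.1.le, hu.2⟩ hbel t (le_trans hu.2.le ht₀t) htb
      have h2 : ζ u + ε ≤ (W t).toReal := (ENNReal.ofReal_le_iff_le_toReal hne).mp h1
      linarith
    -- final contradiction with a.e. finiteness
    have hμ : volume.restrict (Ioc t₀ b) ≠ 0 := by
      rw [Ne, Measure.restrict_eq_zero, Real.volume_Ioc]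
      simp only [ENNReal.ofReal_eq_zero, not_le]
      linarith [ht₀.2]
    have hnb : (ae (volume.restrict (Ioc t₀ b))).NeBot := ae_neBot.mpr hμ
    have hres := ae_restrict_of_ae_restrict_of_subset (Ioc_subset_Ioc_left ht₀.1.le) hineq'
    have hall : ∀ᵐ t ∂(volume.restrict (Ioc t₀ b)), False := by
      filter_upwards [hres, ae_restrict_mem measurableSet_Ioc] with t htP htm
      have hW := hWtop t htm.1.le htm.2
      rw [hW, top_le_iff] at htP
      exact absurd htP.1 (by rw [htP.2]; exact lt_irrefl _)
    obtain ⟨t, ht⟩ := hall.exists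
    exact ht
  refine ⟨main, ?_⟩
  set J := (p - 1) * c * I with hJdef
  have hJ : 0 < J := by positivity
  have h1 : M ^ (p - 1) ≤ J⁻¹ := by
    rw [← one_div, le_div_iff₀ hJ]
    exact main
  have h2 : M = (M ^ (p - 1)) ^ (1 / (p - 1)) := by
    rw [← Real.rpow_mul hM, mul_one_div, div_self hp1.ne', Real.rpow_one]
  rw [h2]
  calc (M ^ (p - 1)) ^ (1 / (p - 1)) ≤ (J⁻¹) ^ (1 / (p - 1)) :=
        Real.rpow_le_rpow (Real.rpow_nonneg hM _) h1 (by positivity)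
    _ = J ^ (-(1:ℝ) / (p - 1)) := by
        rw [← Real.rpow_neg_one J, ← Real.rpow_mul hJ.le]
        congr 1
        ring
end

section
/- Let N ≥ 1, α ∈ (0,1) and p > p_F = 1 + 2/N, and let δ₀ be the Dirac measure at the origin of ℝ^N. Then for every κ > 0 and every T > 0, the time-fractional problem with initial data μ = κδ₀ possesses no nonnegative solution on [0,T]×ℝ^N. -/
open MeasureTheory Real Set Metric
open scoped ENNReal NNReal

noncomputable section

/-- Euclidean space ℝ^N. -/
abbrev RN (N : ℕ) := EuclideanSpace ℝ (Fin N)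

/-- The Gaussian heat kernel `G(t,x) = (4πt)^{-N/2} exp(-|x|²/(4t))` on ℝ^N. -/
def heatKernel (N : ℕ) (t : ℝ) (x : RN N) : ℝ :=
  (4 * Real.pi * t) ^ (-(N : ℝ) / 2) * Real.exp (-‖x‖ ^ 2 / (4 * t))

/-- `(e^{tΔ}μ)(x) = ∫_{ℝ^N} G(t, x-y) dμ(y)` for a nonnegative measure `μ`. -/
def heatSG (N : ℕ) (t : ℝ) (μ : Measure (RN N)) (x : RN N) : ℝ≥0∞ :=
  ∫⁻ y, ENNReal.ofReal (heatKernel N t (x - y)) ∂μ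

/-- `P_α(t)μ(x) = ∫_0^∞ h_α(θ) (e^{t^α θ Δ}μ)(x) dθ`. -/
def Pop (N : ℕ) (α : ℝ) (h : ℝ → ℝ) (t : ℝ) (μ : Measure (RN N)) (x : RN N) : ℝ≥0∞ :=
  ∫⁻ θ in Ioi (0 : ℝ), ENNReal.ofReal (h θ) * heatSG N (t ^ α * θ) μ x

/-- `S_α(t)f(x) = ∫_0^∞ θ h_α(θ) (e^{t^α θ Δ}f)(x) dθ` for a nonnegative function `f`. -/
def Sop (N : ℕ) (α : ℝ) (h : ℝ → ℝ) (t : ℝ) (f : RN N → ℝ≥0∞) (x : RN N) : ℝ≥0∞ :=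
  ∫⁻ θ in Ioi (0 : ℝ), ENNReal.ofReal (θ * h θ) *
    ∫⁻ y, ENNReal.ofReal (heatKernel N (t ^ α * θ) (x - y)) * f y

/-- `h = h_α` is an admissible probability density on `(0,∞)`: it is measurable, positive,
has the moments `∫_0^∞ θ^δ h(θ) dθ = Γ(1+δ)/Γ(1+αδ)` for `δ > -1`, and its Laplace-type
transforms are the Mittag-Leffler functions `E_{α,1}` and `E_{α,α}` at nonpositive arguments. -/
structure IsAdmissibleDensity (α : ℝ) (h : ℝ → ℝ) : Prop where
  measurable : Measurable h
  pos : ∀ θ ∈ Ioi (0 : ℝ), 0 < h θ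
  moment : ∀ δ : ℝ, -1 < δ →
    ∫ θ in Ioi (0 : ℝ), θ ^ δ * h θ = Real.Gamma (1 + δ) / Real.Gamma (1 + α * δ)
  laplace_one : ∀ z : ℝ, z ≤ 0 →
    ∫ θ in Ioi (0 : ℝ), h θ * Real.exp (z * θ) = ∑' k : ℕ, z ^ k / Real.Gamma (α * k + 1)
  laplace_two : ∀ z : ℝ, z ≤ 0 →
    α * ∫ θ in Ioi (0 : ℝ), θ * h θ * Real.exp (z * θ) = ∑' k : ℕ, z ^ k / Real.Gamma (α * k + α)

/-- `u` is a (nonnegative) solution of `∂_t^α u - Δu = u^p`, `u(0) = μ` on `[0,T] × ℝ^N`: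
for a.e. `t ∈ (0,T]` and a.e. `x`, `u(t,x) < ∞` and
`u(t,x) = [P_α(t)μ](x) + α ∫_0^t (t-s)^{α-1} [S_α(t-s) u(s)^p](x) ds`. -/
def IsSolution (N : ℕ) (α p : ℝ) (h : ℝ → ℝ) (μ : Measure (RN N)) (T : ℝ)
    (u : ℝ → RN N → ℝ≥0∞) : Prop :=
  Measurable (Function.uncurry u) ∧
  ∀ᵐ t ∂(volume.restrict (Ioc (0 : ℝ) T)), ∀ᵐ x ∂(volume : Measure (RN N)),
    u t x < ∞ ∧
    u t x = Pop N α h t μ x +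
      ENNReal.ofReal α * ∫⁻ s in Ioo (0 : ℝ) t,
        ENNReal.ofReal ((t - s) ^ (α - 1)) * Sop N α h (t - s) (fun y => u s y ^ p) x

/-- The lifespan `T_α[μ]`: the supremum (in `ℝ≥0∞`) of all `T > 0` such that the problem
possesses a solution on `[0,T] × ℝ^N`; it is `0` if no such `T` exists. -/
def lifespan (N : ℕ) (α p : ℝ) (h : ℝ → ℝ) (μ : Measure (RN N)) : ℝ≥0∞ :=
  ⨆ (T : ℝ) (_ : 0 < T ∧ ∃ u, IsSolution N α p h μ T u), ENNReal.ofReal T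

/-!
The subordination formula gives `P_α(t)(κδ₀) ≳ t^{-αN/2}` on the parabolic ball
`|x| ≤ t^{α/2}`. In turn, a lower bound `u(s) ≥ c s^{-a}` on the parabolic balls for
`s ∈ (t/4, t/2)` makes the Duhamel term at time `t` at least `C c^p t^{-(pa - α)}` there. Iterating
gives `u(t, x) ≥ d_k(t)` with `d_{k+1} = C t^α d_k^p`. As `p > 1 + 2/N` means
`(αN/2)(p - 1) > α`, for small `t` we get `C t^α d_0^{p-1} ≥ 2`, so `d_k ≥ 2^k d_0 → ∞`,
contradicting `u(t, x) < ∞`.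
-/

open Filter Topology

lemma measurable_ofReal_heatKernel (N : ℕ) (t : ℝ) (x : RN N) :
    Measurable fun y : RN N => ENNReal.ofReal (heatKernel N t (x - y)) := by
  unfold heatKernel
  fun_prop

lemma le_heatKernel (N : ℕ) {τ A B : ℝ} (x : RN N) (hτ : 0 < τ)
    (hA : 4 * π * τ ≤ A) (hB : ‖x‖ ^ 2 / (4 * τ) ≤ B) :
    A ^ (-(N : ℝ) / 2) * exp (-B) ≤ heatKernel N τ x := by
  have hN : -(N : ℝ) / 2 ≤ 0 := by have := N.cast_nonneg (α := ℝ); linarith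
  unfold heatKernel
  refine mul_le_mul (Real.rpow_le_rpow_of_nonpos (by positivity) hA hN) ?_
    (by positivity) (by positivity)
  rwa [exp_le_exp, neg_div, neg_le_neg_iff]

lemma heatSG_smul_dirac (N : ℕ) (t κ : ℝ) (x : RN N) :
    heatSG N t (ENNReal.ofReal κ • Measure.dirac 0) x
      = ENNReal.ofReal κ * ENNReal.ofReal (heatKernel N t x) := by
  rw [heatSG, lintegral_smul_measure, lintegral_dirac' _ (measurable_ofReal_heatKernel N t x),
    sub_zero, smul_eq_mul]

lemma rpow_div_two_sq {t : ℝ} (ht : 0 ≤ t) (a : ℝ) : (t ^ (a / 2)) ^ 2 = t ^ a := by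
  rw [← Real.rpow_mul_natCast ht]
  norm_num

lemma le_heatKernel_sub {N : ℕ} {α t s θ : ℝ} (hα : α ∈ Icc (0 : ℝ) 1) (ht : 0 < t)
    (hs : s ∈ Icc 0 (t / 2)) (hθ : θ ∈ Ioo (1 : ℝ) 2) {x y : RN N}
    (hx : ‖x‖ ≤ t ^ (α / 2)) (hy : ‖y‖ ≤ t ^ (α / 2)) :
    (16 * π * t ^ α) ^ (-(N : ℝ) / 2) * exp (-2) ≤ heatKernel N ((t - s) ^ α * θ) (x - y) := by
  have htα : 0 < t ^ α := Real.rpow_pos_of_pos ht α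
  have hupper : (t - s) ^ α ≤ t ^ α :=
    Real.rpow_le_rpow (by linarith [hs.2]) (by linarith [hs.1]) hα.1
  have hlower : t ^ α / 2 ≤ (t - s) ^ α :=
    calc t ^ α / 2 ≤ t ^ α / 2 ^ α := div_le_div_of_nonneg_left htα.le (by positivity)
          (Real.rpow_le_self_of_one_le one_le_two hα.2)
      _ = (t / 2) ^ α := (Real.div_rpow ht.le zero_le_two α).symm
      _ ≤ (t - s) ^ α := Real.rpow_le_rpow (by positivity) (by linarith [hs.2]) hα.1
  have hxy : ‖x - y‖ ^ 2 ≤ 4 * t ^ α :=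
    calc ‖x - y‖ ^ 2 ≤ (2 * t ^ (α / 2)) ^ 2 := by
          gcongr
          linarith [norm_sub_le x y]
      _ = 4 * t ^ α := by rw [mul_pow, rpow_div_two_sq ht.le]; norm_num
  have := mul_le_mul hupper hθ.2.le (by linarith [hθ.1]) htα.le
  refine le_heatKernel N (x - y) (by nlinarith [hθ.1]) (by nlinarith [pi_pos]) ?_
  rw [div_le_iff₀ (by nlinarith [hθ.1])]
  nlinarith [hθ.1]

lemma exists_pos_ofReal_le_setLIntegral_Ioo {h : ℝ → ℝ} (hh : Measurable h)
    (hpos : ∀ θ ∈ Ioo (1 : ℝ) 2, 0 < h θ) :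
    ∃ c > 0, ENNReal.ofReal c ≤ ∫⁻ θ in Ioo (1 : ℝ) 2, ENNReal.ofReal (h θ) := by
  have hsupp : Function.support (fun θ => ENNReal.ofReal (h θ)) ∩ Ioo 1 2 = Ioo 1 2 :=
    inter_eq_right.2 fun θ hθ => ENNReal.ofReal_pos.2 (hpos θ hθ) |>.ne'
  have hI : 0 < ∫⁻ θ in Ioo (1 : ℝ) 2, ENNReal.ofReal (h θ) := by
    rw [setLIntegral_pos_iff hh.ennreal_ofReal, hsupp, Real.volume_Ioo]
    norm_num
  obtain ⟨c, -, hc, hcI⟩ := ENNReal.lt_iff_exists_real_btwn.1 hI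
  exact ⟨c, ENNReal.ofReal_pos.1 hc, hcI.le⟩

section Subordination

variable {N : ℕ} {α : ℝ} {h : ℝ → ℝ}

-- Only `θ ∈ (1, 2)` is kept in the subordination integrals: there all the heat kernels
-- `e^{t^α θ Δ}` are comparable to `e^{t^α Δ}`, and `θ h(θ) ≥ h(θ)`.
lemma lintegral_Ioo_mul_le_Pop {t : ℝ} {μ : Measure (RN N)} {x : RN N} {m : ℝ≥0∞}
    (hm : ∀ θ ∈ Ioo (1 : ℝ) 2, m ≤ heatSG N (t ^ α * θ) μ x) :
    (∫⁻ θ in Ioo (1 : ℝ) 2, ENNReal.ofReal (h θ)) * m ≤ Pop N α h t μ x :=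
  calc (∫⁻ θ in Ioo (1 : ℝ) 2, ENNReal.ofReal (h θ)) * m
      ≤ ∫⁻ θ in Ioo (1 : ℝ) 2, ENNReal.ofReal (h θ) * m := lintegral_mul_const_le _ _
    _ ≤ ∫⁻ θ in Ioo (1 : ℝ) 2, ENNReal.ofReal (h θ) * heatSG N (t ^ α * θ) μ x :=
        setLIntegral_mono' measurableSet_Ioo fun θ hθ => mul_le_mul' le_rfl (hm θ hθ)
    _ ≤ Pop N α h t μ x := lintegral_mono_set fun _ hθ => lt_trans one_pos hθ.1

lemma lintegral_Ioo_mul_le_Sop {τ g : ℝ} {f : RN N → ℝ≥0∞} {x : RN N} {S : Set (RN N)}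
    {m : ℝ≥0∞} (hS : MeasurableSet S)
    (hg : ∀ θ ∈ Ioo (1 : ℝ) 2, ∀ y ∈ S, g ≤ heatKernel N (τ ^ α * θ) (x - y))
    (hf : ∀ᵐ y ∂volume.restrict S, m ≤ f y) :
    (∫⁻ θ in Ioo (1 : ℝ) 2, ENNReal.ofReal (h θ)) * (ENNReal.ofReal g * m * volume S)
      ≤ Sop N α h τ f x := by
  have hinner : ∀ θ ∈ Ioo (1 : ℝ) 2, ENNReal.ofReal g * m * volume S
      ≤ ∫⁻ y, ENNReal.ofReal (heatKernel N (τ ^ α * θ) (x - y)) * f y := by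
    intro θ hθ
    calc ENNReal.ofReal g * m * volume S = ∫⁻ _ in S, ENNReal.ofReal g * m :=
          (setLIntegral_const _ _).symm
      _ ≤ ∫⁻ y in S, ENNReal.ofReal (heatKernel N (τ ^ α * θ) (x - y)) * f y := by
          refine lintegral_mono_ae ?_
          filter_upwards [ae_restrict_mem hS, hf] with y hyS hy
          exact mul_le_mul' (ENNReal.ofReal_le_ofReal (hg θ hθ y hyS)) hy
      _ ≤ _ := setLIntegral_le_lintegral _ _
  have hθh : ∀ θ ∈ Ioo (1 : ℝ) 2, ENNReal.ofReal (h θ) ≤ ENNReal.ofReal (θ * h θ) := by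
    intro θ hθ
    rw [ENNReal.ofReal_mul (by linarith [hθ.1])]
    exact le_mul_of_one_le_left' (ENNReal.one_le_ofReal.2 hθ.1.le)
  calc _ ≤ ∫⁻ θ in Ioo (1 : ℝ) 2, ENNReal.ofReal (h θ) * (ENNReal.ofReal g * m * volume S) :=
        lintegral_mul_const_le _ _
    _ ≤ ∫⁻ θ in Ioo (1 : ℝ) 2, ENNReal.ofReal (θ * h θ) *
          ∫⁻ y, ENNReal.ofReal (heatKernel N (τ ^ α * θ) (x - y)) * f y :=
        setLIntegral_mono' measurableSet_Ioo fun θ hθ => mul_le_mul' (hθh θ hθ) (hinner θ hθ)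
    _ ≤ Sop N α h τ f x := lintegral_mono_set fun _ hθ => lt_trans one_pos hθ.1

lemma le_Pop_smul_dirac {κ t c₀ : ℝ} (hκ : 0 ≤ κ) (hc₀ : 0 ≤ c₀)
    (hc₀h : ENNReal.ofReal c₀ ≤ ∫⁻ θ in Ioo (1 : ℝ) 2, ENNReal.ofReal (h θ)) (ht : 0 < t)
    {x : RN N} (hx : ‖x‖ ≤ t ^ (α / 2)) :
    ENNReal.ofReal (c₀ * κ * ((8 * π) ^ (-(N : ℝ) / 2) * exp (-4⁻¹)) * t ^ (-(α * N / 2)))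
      ≤ Pop N α h t (ENNReal.ofReal κ • Measure.dirac 0) x := by
  have htα : 0 < t ^ α := Real.rpow_pos_of_pos ht α
  have hx2 : ‖x‖ ^ 2 ≤ t ^ α := rpow_div_two_sq ht.le α ▸ pow_le_pow_left₀ (norm_nonneg x) hx 2
  have hG : ∀ θ ∈ Ioo (1 : ℝ) 2,
      (8 * π * t ^ α) ^ (-(N : ℝ) / 2) * exp (-4⁻¹) ≤ heatKernel N (t ^ α * θ) x := by
    intro θ hθ
    have := mul_le_mul_of_nonneg_left hθ.2.le (mul_pos pi_pos htα).le
    refine le_heatKernel N x (by nlinarith [hθ.1]) (by linarith) ?_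
    rw [div_le_iff₀ (by nlinarith [hθ.1])]
    nlinarith [hθ.1]
  have hconst : c₀ * κ * ((8 * π) ^ (-(N : ℝ) / 2) * exp (-4⁻¹)) * t ^ (-(α * N / 2))
      = c₀ * (κ * ((8 * π * t ^ α) ^ (-(N : ℝ) / 2) * exp (-4⁻¹))) := by
    rw [Real.mul_rpow (by positivity) htα.le, ← Real.rpow_mul ht.le]
    ring_nf
  rw [hconst, ENNReal.ofReal_mul hc₀, ENNReal.ofReal_mul hκ]
  refine le_trans (mul_le_mul_left hc₀h _) (lintegral_Ioo_mul_le_Pop fun θ hθ => ?_)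
  rw [heatSG_smul_dirac]
  exact mul_le_mul_right (ENNReal.ofReal_le_ofReal (hG θ hθ)) _

lemma le_Sop_rpow_of_ae_le {p t s c a c₀ : ℝ} {f : RN N → ℝ≥0∞} (hα : α ∈ Icc (0 : ℝ) 1)
    (hp : 0 ≤ p) (hc₀h : ENNReal.ofReal c₀ ≤ ∫⁻ θ in Ioo (1 : ℝ) 2, ENNReal.ofReal (h θ))
    (ht : 0 < t) (hs : s ∈ Ioo (t / 4) (t / 2)) (hc : 0 ≤ c) (ha : 0 ≤ a)
    (hf : ∀ᵐ y ∂(volume : Measure (RN N)),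
      y ∈ ball (0 : RN N) (s ^ (α / 2)) → ENNReal.ofReal (c * s ^ (-a)) ≤ f y)
    {x : RN N} (hx : ‖x‖ ≤ t ^ (α / 2)) :
    ENNReal.ofReal c₀ * (ENNReal.ofReal ((16 * π * t ^ α) ^ (-(N : ℝ) / 2) * exp (-2)) *
        ENNReal.ofReal (c * t ^ (-a)) ^ p * volume (ball (0 : RN N) ((t / 4) ^ (α / 2))))
      ≤ Sop N α h (t - s) (fun y => f y ^ p) x := by
  have hs0 : 0 < s := lt_trans (by positivity) hs.1
  have hρs : (t / 4) ^ (α / 2) ≤ s ^ (α / 2) :=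
    Real.rpow_le_rpow (by positivity) hs.1.le (by linarith [hα.1])
  have hρt : (t / 4) ^ (α / 2) ≤ t ^ (α / 2) :=
    Real.rpow_le_rpow (by positivity) (by linarith) (by linarith [hα.1])
  have hfp : ∀ᵐ y ∂volume.restrict (ball (0 : RN N) ((t / 4) ^ (α / 2))),
      ENNReal.ofReal (c * t ^ (-a)) ^ p ≤ f y ^ p := by
    filter_upwards [ae_restrict_mem measurableSet_ball, ae_restrict_of_ae hf] with y hy hfy
    refine ENNReal.rpow_le_rpow (le_trans (ENNReal.ofReal_le_ofReal ?_) (hfy ?_)) hp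
    · exact mul_le_mul_of_nonneg_left
        (Real.rpow_le_rpow_of_nonpos hs0 (by linarith [hs.2]) (by linarith)) hc
    · exact ball_subset_ball hρs hy
  have hG : ∀ θ ∈ Ioo (1 : ℝ) 2, ∀ y ∈ ball (0 : RN N) ((t / 4) ^ (α / 2)),
      (16 * π * t ^ α) ^ (-(N : ℝ) / 2) * exp (-2) ≤ heatKernel N ((t - s) ^ α * θ) (x - y) :=
    fun θ hθ y hy => le_heatKernel_sub hα ht ⟨hs0.le, hs.2.le⟩ hθ hx
      (le_trans (mem_ball_zero_iff.1 hy).le hρt)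
  exact le_trans (mul_le_mul_left hc₀h _) (lintegral_Ioo_mul_le_Sop measurableSet_ball hG hfp)

end Subordination

def duhamelTerm (N : ℕ) (α p : ℝ) (h : ℝ → ℝ) (u : ℝ → RN N → ℝ≥0∞) (t : ℝ) (x : RN N) :
    ℝ≥0∞ :=
  ENNReal.ofReal α * ∫⁻ s in Ioo (0 : ℝ) t,
    ENNReal.ofReal ((t - s) ^ (α - 1)) * Sop N α h (t - s) (fun y => u s y ^ p) x

def HasPowerLowerBound (N : ℕ) (α T c a : ℝ) (u : ℝ → RN N → ℝ≥0∞) : Prop :=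
  ∀ᵐ t ∂volume.restrict (Ioo (0 : ℝ) T), ∀ᵐ y ∂(volume : Measure (RN N)),
    y ∈ ball (0 : RN N) (t ^ (α / 2)) → ENNReal.ofReal (c * t ^ (-a)) ≤ u t y

section Solution

variable {N : ℕ} {α p T : ℝ} {h : ℝ → ℝ} {μ : Measure (RN N)} {u : ℝ → RN N → ℝ≥0∞}

lemma IsSolution.ae_lt_top_and_le (hu : IsSolution N α p h μ T u) :
    ∀ᵐ t ∂volume.restrict (Ioo (0 : ℝ) T), ∀ᵐ x ∂(volume : Measure (RN N)),
      u t x < ∞ ∧ Pop N α h t μ x ≤ u t x ∧ duhamelTerm N α p h u t x ≤ u t x := by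
  filter_upwards [ae_restrict_of_ae_restrict_of_subset Ioo_subset_Ioc_self hu.2] with t ht
  filter_upwards [ht] with x ⟨hfin, heq⟩
  exact ⟨hfin, heq ▸ le_self_add, heq ▸ le_add_self⟩

lemma le_duhamelTerm_of_ae_le {t : ℝ} {x : RN N} {K : ℝ≥0∞} (ht : 0 < t) (hα : α ≤ 1)
    (hK : ∀ᵐ s ∂volume.restrict (Ioo (t / 4) (t / 2)),
      K ≤ Sop N α h (t - s) (fun y => u s y ^ p) x) :
    ENNReal.ofReal α * (ENNReal.ofReal (t / 4) * (ENNReal.ofReal (t ^ (α - 1)) * K))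
      ≤ duhamelTerm N α p h u t x := by
  refine mul_le_mul_right ?_ _
  calc ENNReal.ofReal (t / 4) * (ENNReal.ofReal (t ^ (α - 1)) * K)
      = ∫⁻ _ in Ioo (t / 4) (t / 2), ENNReal.ofReal (t ^ (α - 1)) * K := by
        rw [setLIntegral_const, Real.volume_Ioo, mul_comm]; ring_nf
    _ ≤ ∫⁻ s in Ioo (t / 4) (t / 2),
          ENNReal.ofReal ((t - s) ^ (α - 1)) * Sop N α h (t - s) (fun y => u s y ^ p) x := by
        refine lintegral_mono_ae ?_
        filter_upwards [ae_restrict_mem measurableSet_Ioo, hK] with s hs hKs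
        refine mul_le_mul' (ENNReal.ofReal_le_ofReal ?_) hKs
        exact Real.rpow_le_rpow_of_nonpos (by linarith [hs.2]) (by linarith [hs.1]) (by linarith)
    _ ≤ ∫⁻ s in Ioo 0 t,
          ENNReal.ofReal ((t - s) ^ (α - 1)) * Sop N α h (t - s) (fun y => u s y ^ p) x :=
        lintegral_mono_set fun s hs => ⟨lt_trans (by positivity) hs.1, by linarith [hs.2]⟩

lemma exists_le_duhamelTerm (hα : α ∈ Ioc (0 : ℝ) 1) (hp : 0 ≤ p) {c₀ : ℝ} (hc₀ : 0 < c₀)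
    (hc₀h : ENNReal.ofReal c₀ ≤ ∫⁻ θ in Ioo (1 : ℝ) 2, ENNReal.ofReal (h θ)) :
    ∃ C > 0, ∀ {u : ℝ → RN N → ℝ≥0∞} {t c a : ℝ}, 0 < t → 0 < c → 0 ≤ a →
      (∀ᵐ s ∂volume.restrict (Ioo (t / 4) (t / 2)), ∀ᵐ y ∂(volume : Measure (RN N)),
        y ∈ ball (0 : RN N) (s ^ (α / 2)) → ENNReal.ofReal (c * s ^ (-a)) ≤ u s y) →
      ∀ x : RN N, ‖x‖ ≤ t ^ (α / 2) →
        ENNReal.ofReal (C * c ^ p * t ^ (-(p * a - α))) ≤ duhamelTerm N α p h u t x := by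
  set v := (volume (ball (0 : RN N) 1)).toReal
  have hv : ENNReal.ofReal v = volume (ball (0 : RN N) 1) :=
    ENNReal.ofReal_toReal measure_ball_lt_top.ne
  have hvpos : 0 < v :=
    ENNReal.toReal_pos (measure_ball_pos _ _ one_pos).ne' measure_ball_lt_top.ne
  -- `C` collects `α`, the length `t/4` of the window `s ∈ (t/4, t/2)`, `c₀`, the kernel bound of
  -- `le_heatKernel_sub` and the volume of the ball of radius `(t/4)^{α/2}`.
  refine ⟨α * c₀ * ((16 * π) ^ (-(N : ℝ) / 2) * exp (-2)) * (4 ^ (-(α * N / 2)) * v) / 4,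
    by have := hα.1; positivity, ?_⟩
  intro u t c a ht hc ha hlow x hx
  set ρ := (t / 4) ^ (α / 2)
  set G := (16 * π * t ^ α) ^ (-(N : ℝ) / 2) * exp (-2) with hGdef
  set K := ENNReal.ofReal c₀ * (ENNReal.ofReal G * ENNReal.ofReal (c * t ^ (-a)) ^ p *
    volume (ball (0 : RN N) ρ)) with hKdef
  have hduhamel := le_duhamelTerm_of_ae_le (p := p) (u := u) (x := x) ht hα.2 (K := K) (by
    filter_upwards [ae_restrict_mem measurableSet_Ioo, hlow] with s hs hlows
    exact le_Sop_rpow_of_ae_le (Ioc_subset_Icc_self hα) hp hc₀h ht hs hc.le ha hlows hx)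
  have hG : G = (16 * π) ^ (-(N : ℝ) / 2) * exp (-2) * t ^ (-(α * N / 2)) := by
    rw [hGdef, Real.mul_rpow (by positivity) (by positivity), ← Real.rpow_mul ht.le]
    ring_nf
  have hρN : ρ ^ N = 4 ^ (-(α * N / 2)) * t ^ (α * N / 2) := by
    rw [← Real.rpow_mul_natCast (by positivity), Real.div_rpow ht.le (by norm_num),
      Real.rpow_neg (by norm_num)]
    ring_nf
  have hcp : (c * t ^ (-a)) ^ p = c ^ p * t ^ (-(a * p)) := by
    rw [Real.mul_rpow hc.le (by positivity), ← Real.rpow_mul ht.le, neg_mul]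
  have htexp : t ^ (-(p * a - α))
      = t ^ (-(α * N / 2)) * t ^ (α * N / 2) * t ^ (α - 1) * t * t ^ (-(a * p)) := by
    rw [← Real.rpow_add ht, ← Real.rpow_add ht, ← Real.rpow_add_one ht.ne', ← Real.rpow_add ht]
    ring_nf
  have hvol : volume (ball (0 : RN N) ρ) = ENNReal.ofReal (ρ ^ N) * ENNReal.ofReal v := by
    rw [Measure.addHaar_ball_of_pos _ _ (by positivity), finrank_euclideanSpace_fin, hv]
  refine le_trans (le_of_eq ?_) hduhamel
  rw [hKdef, hvol, ENNReal.ofReal_rpow_of_pos (by positivity),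
    ← ENNReal.ofReal_mul (by positivity), ← ENNReal.ofReal_mul (by positivity),
    ← ENNReal.ofReal_mul (by positivity),
    ← ENNReal.ofReal_mul (by positivity), ← ENNReal.ofReal_mul (by positivity),
    ← ENNReal.ofReal_mul (by positivity), ← ENNReal.ofReal_mul hα.1.le, hG, hρN, hcp, htexp]
  ring_nf

lemma IsSolution.hasPowerLowerBound_of_dirac {κ c₀ : ℝ}
    (hu : IsSolution N α p h (ENNReal.ofReal κ • Measure.dirac 0) T u) (hκ : 0 < κ) (hc₀ : 0 < c₀)
    (hc₀h : ENNReal.ofReal c₀ ≤ ∫⁻ θ in Ioo (1 : ℝ) 2, ENNReal.ofReal (h θ)) :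
    ∃ c > 0, HasPowerLowerBound N α T c (α * N / 2) u := by
  refine ⟨c₀ * κ * ((8 * π) ^ (-(N : ℝ) / 2) * exp (-4⁻¹)), by positivity, ?_⟩
  filter_upwards [hu.ae_lt_top_and_le, ae_restrict_mem measurableSet_Ioo] with t ht htT
  filter_upwards [ht] with y hy hyt
  exact le_trans (le_Pop_smul_dirac hκ.le hc₀.le hc₀h htT.1 (mem_ball_zero_iff.1 hyt).le) hy.2.1

lemma IsSolution.exists_hasPowerLowerBound_succ (hu : IsSolution N α p h μ T u)
    (hα : α ∈ Ioc (0 : ℝ) 1) (hp : 0 ≤ p) {c₀ : ℝ} (hc₀ : 0 < c₀)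
    (hc₀h : ENNReal.ofReal c₀ ≤ ∫⁻ θ in Ioo (1 : ℝ) 2, ENNReal.ofReal (h θ)) :
    ∃ C > 0, ∀ ⦃c a : ℝ⦄, 0 < c → 0 ≤ a → HasPowerLowerBound N α T c a u →
      HasPowerLowerBound N α T (C * c ^ p) (p * a - α) u := by
  obtain ⟨C, hC, hduhamel⟩ := exists_le_duhamelTerm (N := N) hα hp hc₀ hc₀h
  refine ⟨C, hC, fun c a hc ha hlow => ?_⟩
  filter_upwards [hu.ae_lt_top_and_le, ae_restrict_mem measurableSet_Ioo] with t ht htT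
  have hlow' := ae_restrict_of_ae_restrict_of_subset
    (show Ioo (t / 4) (t / 2) ⊆ Ioo 0 T from
      Ioo_subset_Ioo (by linarith [htT.1]) (by linarith [htT.1, htT.2])) hlow
  filter_upwards [ht] with y hy hyt
  exact le_trans (hduhamel htT.1 hc ha hlow' y (mem_ball_zero_iff.1 hyt).le) hy.2.2

end Solution

section Iteration

def iterExponent (α p a₀ : ℝ) : ℕ → ℝ
  | 0 => a₀
  | k + 1 => p * iterExponent α p a₀ k - α

def iterCoeff (p C c₀ : ℝ) : ℕ → ℝ
  | 0 => c₀
  | k + 1 => C * iterCoeff p C c₀ k ^ p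

variable {α p a₀ C c₀ : ℝ}

lemma iterCoeff_pos (hC : 0 < C) (hc₀ : 0 < c₀) : ∀ k, 0 < iterCoeff p C c₀ k
  | 0 => hc₀
  | k + 1 => mul_pos hC (Real.rpow_pos_of_pos (iterCoeff_pos hC hc₀ k) p)

lemma le_iterExponent (hp : 0 ≤ p) (hgap : α ≤ a₀ * (p - 1)) :
    ∀ k, a₀ ≤ iterExponent α p a₀ k
  | 0 => le_rfl
  | k + 1 => by
    have := mul_le_mul_of_nonneg_left (le_iterExponent hp hgap k) hp
    simp only [iterExponent]
    linarith

lemma iterCoeff_succ_mul_rpow {t : ℝ} (ht : 0 < t) (k : ℕ) (hk : 0 ≤ iterCoeff p C c₀ k) :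
    iterCoeff p C c₀ (k + 1) * t ^ (-iterExponent α p a₀ (k + 1))
      = C * t ^ α * (iterCoeff p C c₀ k * t ^ (-iterExponent α p a₀ k)) ^ p := by
  simp only [iterCoeff, iterExponent]
  rw [Real.mul_rpow hk (by positivity), ← Real.rpow_mul ht.le,
    show -(p * iterExponent α p a₀ k - α) = α + -iterExponent α p a₀ k * p by ring,
    Real.rpow_add ht]
  ring

lemma HasPowerLowerBound.iterate {N : ℕ} {T : ℝ} {u : ℝ → RN N → ℝ≥0∞}
    (h₀ : HasPowerLowerBound N α T c₀ a₀ u) (hC : 0 < C) (hc₀ : 0 < c₀) (ha₀ : 0 ≤ a₀)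
    (hp : 0 ≤ p) (hgap : α ≤ a₀ * (p - 1))
    (hstep : ∀ ⦃c a : ℝ⦄, 0 < c → 0 ≤ a → HasPowerLowerBound N α T c a u →
      HasPowerLowerBound N α T (C * c ^ p) (p * a - α) u) :
    ∀ k, HasPowerLowerBound N α T (iterCoeff p C c₀ k) (iterExponent α p a₀ k) u
  | 0 => h₀
  | k + 1 => hstep (iterCoeff_pos hC hc₀ k) (ha₀.trans (le_iterExponent hp hgap k))
      (h₀.iterate hC hc₀ ha₀ hp hgap hstep k)

end Iteration

lemma not_bddAbove_range_of_succ_eq_mul_rpow {d : ℕ → ℝ} {K p : ℝ} (hp : 1 ≤ p)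
    (hd₀ : 0 < d 0) (hK : 2 ≤ K * d 0 ^ (p - 1)) (hd : ∀ k, d (k + 1) = K * d k ^ p) :
    ¬ BddAbove (range d) := by
  have hK₀ : 0 ≤ K := by
    by_contra! hK₀
    nlinarith [Real.rpow_pos_of_pos hd₀ (p - 1)]
  have hgrow : ∀ k, 2 ^ k * d 0 ≤ d k := by
    intro k
    induction k with
    | zero => simp
    | succ k ih =>
      have hdk : d 0 ≤ d k :=
        le_trans (le_mul_of_one_le_left hd₀.le (one_le_pow₀ one_le_two)) ih
      have hdk₀ : 0 < d k := hd₀.trans_le hdk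
      have hK' : 2 ≤ K * d k ^ (p - 1) :=
        hK.trans (mul_le_mul_of_nonneg_left (Real.rpow_le_rpow hd₀.le hdk (by linarith)) hK₀)
      calc 2 ^ (k + 1) * d 0 ≤ 2 * d k := by rw [pow_succ]; linarith
        _ ≤ K * d k ^ (p - 1) * d k := mul_le_mul_of_nonneg_right hK' hdk₀.le
        _ = d (k + 1) := by
          rw [hd, Real.rpow_sub_one hdk₀.ne', mul_assoc, div_mul_cancel₀ _ hdk₀.ne']
  rintro ⟨M, hM⟩
  obtain ⟨k, hk⟩ := pow_unbounded_of_one_lt (M / d 0) one_lt_two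
  rw [div_lt_iff₀ hd₀] at hk
  linarith [hgrow k, hM ⟨k, rfl⟩]

lemma exists_pos_of_ae_restrict_Ioo_of_eventually {T : ℝ} (hT : 0 < T) {P Q : ℝ → Prop}
    (hP : ∀ᵐ t ∂volume.restrict (Ioo 0 T), P t) (hQ : ∀ᶠ t in 𝓝[>] 0, Q t) :
    ∃ t, 0 < t ∧ P t ∧ Q t := by
  obtain ⟨ε, hε, hεQ⟩ := mem_nhdsGT_iff_exists_Ioo_subset.1 hQ
  have hne : volume (Ioo 0 (min T ε)) ≠ 0 := by
    rw [Real.volume_Ioo]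
    simpa using lt_min hT hε
  obtain ⟨t, ht, hPt⟩ := Measure.exists_mem_of_measure_ne_zero_of_ae hne
    (ae_restrict_of_ae_restrict_of_subset (Ioo_subset_Ioo_right (min_le_left T ε)) hP)
  exact ⟨t, ht.1, hPt, hεQ ⟨ht.1, ht.2.trans_le (min_le_right T ε)⟩⟩

lemma not_ae_lt_top_of_forall_hasPowerLowerBound {N : ℕ} {α p T C c a : ℝ}
    {u : ℝ → RN N → ℝ≥0∞} (hT : 0 < T) (hp : 1 ≤ p) (hC : 0 < C) (hc : 0 < c)
    (hgap : α < a * (p - 1))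
    (hbound : ∀ k, HasPowerLowerBound N α T (iterCoeff p C c k) (iterExponent α p a k) u) :
    ¬ ∀ᵐ t ∂volume.restrict (Ioo (0 : ℝ) T), ∀ᵐ y ∂(volume : Measure (RN N)), u t y < ∞ := by
  intro hfin
  have hsmall : ∀ᶠ t in 𝓝[>] 0, 2 ≤ C * t ^ α * (c * t ^ (-a)) ^ (p - 1) := by
    have hlim : Tendsto (fun t : ℝ => C * c ^ (p - 1) * t ^ (-(a * (p - 1) - α)))
        (𝓝[>] 0) atTop :=
      (tendsto_rpow_neg_nhdsGT_zero (by linarith)).const_mul_atTop (by positivity)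
    filter_upwards [hlim.eventually_ge_atTop 2, self_mem_nhdsWithin] with t h2 (ht : 0 < t)
    refine h2.trans_eq ?_
    rw [Real.mul_rpow hc.le (by positivity), ← Real.rpow_mul ht.le,
      show -(a * (p - 1) - α) = α + -a * (p - 1) by ring, Real.rpow_add ht]
    ring
  obtain ⟨t, ht, ⟨hbt, hfint⟩, h2⟩ :=
    exists_pos_of_ae_restrict_Ioo_of_eventually hT ((ae_all_iff.2 hbound).and hfin) hsmall
  obtain ⟨y, hy, hby, hfy⟩ := Measure.exists_mem_of_measure_ne_zero_of_ae
    (measure_ball_pos volume (0 : RN N) (Real.rpow_pos_of_pos ht (α / 2))).ne'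
    (ae_restrict_of_ae ((ae_all_iff.2 hbt).and hfint))
  refine not_bddAbove_range_of_succ_eq_mul_rpow
    (d := fun k => iterCoeff p C c k * t ^ (-iterExponent α p a k))
    hp (by simp only [iterCoeff, iterExponent]; positivity) h2
    (fun k => iterCoeff_succ_mul_rpow ht k (iterCoeff_pos hC hc k).le) ⟨(u t y).toReal, ?_⟩
  rintro _ ⟨k, rfl⟩
  exact (ENNReal.ofReal_le_iff_le_toReal hfy.ne).1 (hby k hy)

/-- Corollary 5.1 (iii): for `p > p_F` the problem with initial data
`κδ₀` possesses no nonnegative local-in-time solutions, for any `κ > 0`. -/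
theorem dirac_supercritical_nonexistence
    (N : ℕ) (hN : 1 ≤ N) (α p : ℝ) (hα : α ∈ Ioo (0 : ℝ) 1)
    (hp : 1 + 2 / (N : ℝ) < p) :
    ∀ h : ℝ → ℝ, IsAdmissibleDensity α h →
    ∀ κ : ℝ, 0 < κ → ∀ T : ℝ, 0 < T →
    ∀ u : ℝ → RN N → ℝ≥0∞,
      ¬ IsSolution N α p h (ENNReal.ofReal κ • Measure.dirac (0 : RN N)) T u := by
  intro h hadm κ hκ T hT u hu
  have hN₀ : (0 : ℝ) < N := by exact_mod_cast hN
  have hp₁ : 1 < p := lt_of_le_of_lt (le_add_of_nonneg_right (by positivity)) hp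
  have hgap : α < α * N / 2 * (p - 1) :=
    calc α = α * N / 2 * (2 / N) := by field_simp
      _ < α * N / 2 * (p - 1) := by have := hα.1; gcongr; linarith
  obtain ⟨c₀, hc₀, hc₀h⟩ := exists_pos_ofReal_le_setLIntegral_Ioo hadm.measurable
    fun θ hθ => hadm.pos θ (lt_trans one_pos hθ.1)
  obtain ⟨c, hc, hbase⟩ := hu.hasPowerLowerBound_of_dirac hκ hc₀ hc₀h
  obtain ⟨C, hC, hstep⟩ :=
    hu.exists_hasPowerLowerBound_succ (Ioo_subset_Ioc_self hα) (by linarith) hc₀ hc₀h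
  refine not_ae_lt_top_of_forall_hasPowerLowerBound hT hp₁.le hC hc hgap
    (hbase.iterate hC hc (by have := hα.1; positivity) (by linarith) hgap.le hstep) ?_
  filter_upwards [hu.ae_lt_top_and_le] with t ht
  filter_upwards [ht] with y hy using hy.1
end
end
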